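/- arXiv:2010.11400 — 4 statements merged into one kernel-verified Lean document; each statement's English description precedes it below -/
import Mathlib

section
/- Consider target region Ω = [0,1] with uniform density, one FC at q ∈ ℝ, two APs with weights a_1, a_2 > 0 and cell boundary r ∈ (0,1), AP positions determined by p_1 = (r + 2β'q)/(2(1+β')) and p_2 = (1 + r + 2β'q)/(2(1+β')) with β' > 0. Then among the stationary points of the total two-tier power, the choice r = q = 1/(1 + √(a_1/a_2)) gives total power P = ((4β'+1)/(12(β'+1)))·(√(a_1a_2)/(√a_1 + √a_2))². -/
/-!
Placing each AP at the weighted mean of its cell centroid `m` and the FC `q` makes the power of a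
cell of length `L` equal to `L³/12 + β'/(1+β') · L · (m - q)²`.  With the FC on the cell boundary
`r`, both cells have `|m - q| = L/2`, so the total power is `(4β'+1)/(12(β'+1)) · (a₁r³ + a₂(1-r)³)`,
and at `r = √a₂/(√a₁+√a₂)` the weighted sum of cubes collapses to `(√(a₁a₂)/(√a₁+√a₂))²`.
-/

open intervalIntegral

theorem integral_sub_sq_add_const (p c a b : ℝ) :
    ∫ w in a..b, ((p - w) ^ 2 + c) = ((p - a) ^ 3 - (p - b) ^ 3) / 3 + (b - a) * c := by
  have hsq : IntervalIntegrable (fun w : ℝ => (p - w) ^ 2) MeasureTheory.volume a b :=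
    ((continuous_const.sub continuous_id).pow 2).intervalIntegrable a b
  rw [integral_add hsq intervalIntegrable_const, integral_comp_sub_left (fun x => x ^ 2) p,
    integral_pow, integral_const, smul_eq_mul]
  ring

theorem integral_cell_power_of_eq_weighted_centroid {a b p q β' : ℝ} (hβ : 1 + β' ≠ 0)
    (hp : p = (a + b + 2 * β' * q) / (2 * (1 + β'))) :
    ∫ w in a..b, ((p - w) ^ 2 + β' * (p - q) ^ 2)
      = (b - a) ^ 3 / 12 + β' / (1 + β') * (b - a) * ((a + b) / 2 - q) ^ 2 := by
  rw [integral_sub_sq_add_const, hp]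
  field_simp
  ring

theorem one_div_one_add_sqrt_div {a1 a2 : ℝ} (ha1 : 0 ≤ a1) (ha2 : 0 < a2) :
    1 / (1 + √(a1 / a2)) = √a2 / (√a1 + √a2) := by
  have hsa2 : 0 < √a2 := Real.sqrt_pos.mpr ha2
  rw [Real.sqrt_div ha1]
  field_simp
  ring

theorem mul_cube_add_mul_cube_at_sqrt_split {a1 a2 : ℝ} (ha1 : 0 < a1) (ha2 : 0 < a2) :
    a1 * (√a2 / (√a1 + √a2)) ^ 3 + a2 * (1 - √a2 / (√a1 + √a2)) ^ 3
      = (√(a1 * a2) / (√a1 + √a2)) ^ 2 := by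
  obtain ⟨x, hx, rfl⟩ : ∃ x, 0 < x ∧ a1 = x ^ 2 :=
    ⟨√a1, Real.sqrt_pos.mpr ha1, (Real.sq_sqrt ha1.le).symm⟩
  obtain ⟨y, hy, rfl⟩ : ∃ y, 0 < y ∧ a2 = y ^ 2 :=
    ⟨√a2, Real.sqrt_pos.mpr ha2, (Real.sq_sqrt ha2.le).symm⟩
  rw [← mul_pow, Real.sqrt_sq (mul_pos hx hy).le, Real.sqrt_sq hx.le, Real.sqrt_sq hy.le]
  field_simp
  ring

/-- For the two-AP, one-FC example on [0,1] with uniform density,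
the stationary point r = q = 1/(1+√(a₁/a₂)) yields total two-tier power
((4β'+1)/(12(β'+1)))·(√(a₁a₂)/(√a₁+√a₂))². -/
theorem two_ap_one_fc_stationary_power
    (a1 a2 β' : ℝ) (ha1 : 0 < a1) (ha2 : 0 < a2) (hβ : 0 < β')
    (r q p1 p2 : ℝ)
    (hr : r = 1 / (1 + Real.sqrt (a1 / a2)))
    (hq : q = 1 / (1 + Real.sqrt (a1 / a2)))
    (hp1 : p1 = (r + 2 * β' * q) / (2 * (1 + β')))
    (hp2 : p2 = (1 + r + 2 * β' * q) / (2 * (1 + β'))) :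
    a1 * (∫ w in (0:ℝ)..r, ((p1 - w) ^ 2 + β' * (p1 - q) ^ 2))
      + a2 * (∫ w in r..(1:ℝ), ((p2 - w) ^ 2 + β' * (p2 - q) ^ 2))
      = ((4 * β' + 1) / (12 * (β' + 1)))
          * (Real.sqrt (a1 * a2) / (Real.sqrt a1 + Real.sqrt a2)) ^ 2 := by
  have hβ1 : 1 + β' ≠ 0 := by positivity
  obtain rfl : q = r := hq.trans hr.symm
  have hcell1 : ∫ w in (0:ℝ)..q, ((p1 - w) ^ 2 + β' * (p1 - q) ^ 2)
      = (4 * β' + 1) / (12 * (β' + 1)) * q ^ 3 := by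
    rw [integral_cell_power_of_eq_weighted_centroid hβ1 (by rw [hp1, zero_add])]
    field_simp
    ring
  have hcell2 : ∫ w in q..(1:ℝ), ((p2 - w) ^ 2 + β' * (p2 - q) ^ 2)
      = (4 * β' + 1) / (12 * (β' + 1)) * (1 - q) ^ 3 := by
    rw [integral_cell_power_of_eq_weighted_centroid hβ1 (by rw [hp2, add_comm q 1])]
    field_simp
    ring
  rw [hcell1, hcell2, ← mul_cube_add_mul_cube_at_sqrt_split ha1 ha2,
    hr, one_div_one_add_sqrt_div ha1.le ha2]
  ring
end

section
/- With Ω = [0,1], uniform density, two APs with weights a_1, a_2 > 0, one FC, and β' = βκ > 0, the optimal two-tier power using both APs, ((4β'+1)/(12(β'+1)))·(√(a_1a_2)/(√a_1+√a_2))², is strictly less than min(a_1, a_2)/12 (the power using only the stronger AP collocated with the FC at the centroid) if and only if √((4β'+1)/(β'+1)) − 1 < √(a_1/a_2) < 1/(√((4β'+1)/(β'+1)) − 1). -/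
/-!
Both sides of the power comparison are `1/12` times a square, so taking square roots turns it
into `t * (s₁ s₂ / (s₁ + s₂)) < min s₁ s₂` with `sᵢ = √aᵢ` and `t = √((4β' + 1)/(β' + 1)) > 1`.
Compared with `s₁` this reads `(t - 1) s₂ < s₁`, compared with `s₂` it reads `(t - 1) s₁ < s₂`,
which together bound the ratio `s₁ / s₂` from both sides.
-/

open Real

section HarmonicScaling

variable {t x y : ℝ}

lemma mul_harmonic_lt_left_iff (hx : 0 < x) (hy : 0 < y) :
    t * (x * y / (x + y)) < x ↔ t - 1 < x / y := by
  rw [← mul_div_assoc, div_lt_iff₀ (by positivity), lt_div_iff₀ hy]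
  constructor <;> intro h <;> nlinarith

lemma mul_harmonic_lt_right_iff (hx : 0 < x) (hy : 0 < y) (ht : 1 < t) :
    t * (x * y / (x + y)) < y ↔ x / y < 1 / (t - 1) := by
  rw [← mul_div_assoc, div_lt_iff₀ (by positivity), div_lt_div_iff₀ hy (by linarith)]
  constructor <;> intro h <;> nlinarith

lemma mul_harmonic_lt_min_iff (hx : 0 < x) (hy : 0 < y) (ht : 1 < t) :
    t * (x * y / (x + y)) < min x y ↔ t - 1 < x / y ∧ x / y < 1 / (t - 1) := by
  rw [lt_min_iff, mul_harmonic_lt_left_iff hx hy, mul_harmonic_lt_right_iff hx hy ht]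

end HarmonicScaling

lemma one_lt_four_mul_add_one_div_add_one {β : ℝ} (hβ : 0 < β) : 1 < (4 * β + 1) / (β + 1) :=
  (one_lt_div (by linarith)).mpr (by linarith)

/-- Using both APs beats using only the stronger AP iff the
usefulness condition on √(a₁/a₂) holds (strict version). -/
theorem two_ap_usefulness_iff
    (a1 a2 β' : ℝ) (ha1 : 0 < a1) (ha2 : 0 < a2) (hβ : 0 < β') :
    ((4 * β' + 1) / (12 * (β' + 1)))
        * (Real.sqrt (a1 * a2) / (Real.sqrt a1 + Real.sqrt a2)) ^ 2
      < min a1 a2 / 12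
    ↔ (Real.sqrt ((4 * β' + 1) / (β' + 1)) - 1 < Real.sqrt (a1 / a2)
        ∧ Real.sqrt (a1 / a2)
            < 1 / (Real.sqrt ((4 * β' + 1) / (β' + 1)) - 1)) := by
  set t := √((4 * β' + 1) / (β' + 1))
  have ht : 1 < t :=
    (lt_sqrt zero_le_one).mpr (by simpa using one_lt_four_mul_add_one_div_add_one hβ)
  have hcoeff : (4 * β' + 1) / (12 * (β' + 1)) = t ^ 2 / 12 := by
    rw [sq_sqrt (by positivity)]
    field_simp
  rw [hcoeff, sqrt_mul ha1.le, sqrt_div ha1.le,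
    ← mul_harmonic_lt_min_iff (sqrt_pos.mpr ha1) (sqrt_pos.mpr ha2) ht,
    div_mul_eq_mul_div, div_lt_div_iff_of_pos_right (by norm_num), ← mul_pow,
    ← sqrt_lt_sqrt_iff (sq_nonneg _), sqrt_sq (by positivity), sqrt_monotone.map_min]
end

section
/- If N > M and a_1 ≤ a_2 ≤ ... ≤ a_N, then A(s) = 0 for all s ≥ D_M, where D_M is the minimal M-level one-tier distortion using weights a_1,...,a_M: an optimal M-level quantizer (x*_1,...,x*_M, R*_1,...,R*_M) can be extended to a feasible two-tier deployment with zero AP power by collocating each FC with an AP. -/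
open MeasureTheory

noncomputable section

/-- A measurable partition of Ω indexed by `Fin N`. -/
def IsPartitionOn (Ω : Set (EuclideanSpace ℝ (Fin 2))) {N : ℕ}
    (R : Fin N → Set (EuclideanSpace ℝ (Fin 2))) : Prop :=
  (∀ n, MeasurableSet (R n)) ∧ Pairwise (Function.onFun Disjoint R) ∧ (⋃ n, R n) = Ω

/-- Sensor power P^S(P, R) = ∑ₙ ∫_{Rₙ} aₙ‖pₙ − w‖² f(w) dw. -/
def sensorPower {N : ℕ} (a : Fin N → ℝ) (f : EuclideanSpace ℝ (Fin 2) → ℝ)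
    (p : Fin N → EuclideanSpace ℝ (Fin 2))
    (R : Fin N → Set (EuclideanSpace ℝ (Fin 2))) : ℝ :=
  ∑ n, ∫ w in R n, a n * ‖p n - w‖ ^ 2 * f w

/-- AP power P^A(P, Q, R, T) = ∑ₙ ∫_{Rₙ} b_{n,T(n)}‖pₙ − q_{T(n)}‖² f(w) dw. -/
def apPower {N M : ℕ} (b : Fin N → Fin M → ℝ) (f : EuclideanSpace ℝ (Fin 2) → ℝ)
    (p : Fin N → EuclideanSpace ℝ (Fin 2)) (q : Fin M → EuclideanSpace ℝ (Fin 2))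
    (R : Fin N → Set (EuclideanSpace ℝ (Fin 2))) (T : Fin N → Fin M) : ℝ :=
  ∑ n, ∫ w in R n, b n (T n) * ‖p n - q (T n)‖ ^ 2 * f w

/-- AP-Sensor power function A(s). -/
def APSensorFn (Ω : Set (EuclideanSpace ℝ (Fin 2))) {N M : ℕ}
    (a : Fin N → ℝ) (b : Fin N → Fin M → ℝ)
    (f : EuclideanSpace ℝ (Fin 2) → ℝ) (s : ℝ) : ℝ :=
  sInf {x | ∃ (p : Fin N → EuclideanSpace ℝ (Fin 2))
      (q : Fin M → EuclideanSpace ℝ (Fin 2))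
      (R : Fin N → Set (EuclideanSpace ℝ (Fin 2))) (T : Fin N → Fin M),
    IsPartitionOn Ω R ∧ apPower b f p q R T = x ∧ sensorPower a f p R ≤ s}

/-- Minimum K-level one-tier quantization distortion D_K. -/
def quantDistortion (Ω : Set (EuclideanSpace ℝ (Fin 2))) (K : ℕ)
    (a : Fin K → ℝ) (f : EuclideanSpace ℝ (Fin 2) → ℝ) : ℝ :=
  sInf {x | ∃ (p : Fin K → EuclideanSpace ℝ (Fin 2))
      (R : Fin K → Set (EuclideanSpace ℝ (Fin 2))),
    IsPartitionOn Ω R ∧ sensorPower a f p R = x}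

/-- If N > M and the weights are sorted increasingly, then
A(s) = 0 for all s ≥ D_M, where D_M uses the M smallest weights. -/
theorem APSensorFn_eq_zero_of_DM_le
    (N M : ℕ) (hMN : M < N) (hM : 0 < M)
    (Ω : Set (EuclideanSpace ℝ (Fin 2))) (hΩ : MeasurableSet Ω)
    (f : EuclideanSpace ℝ (Fin 2) → ℝ) (hf : ∀ w, 0 ≤ f w)
    (a : Fin N → ℝ) (ha : ∀ n, 0 < a n) (hmono : Monotone a)
    (b : Fin N → Fin M → ℝ) (hb : ∀ n m, 0 < b n m)
    -- the minimal M-level distortion is attained by some optimal quantizer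
    (hattain : ∃ (p : Fin M → EuclideanSpace ℝ (Fin 2))
        (R : Fin M → Set (EuclideanSpace ℝ (Fin 2))),
      IsPartitionOn Ω R ∧
        sensorPower (fun i => a (Fin.castLE hMN.le i)) f p R
          = quantDistortion Ω M (fun i => a (Fin.castLE hMN.le i)) f)
    (s : ℝ) (hs : quantDistortion Ω M (fun i => a (Fin.castLE hMN.le i)) f ≤ s) :
    APSensorFn Ω a b f s = 0 := by
  obtain ⟨p, R, hpart, hval⟩ := hattain
  classical
  set p' : Fin N → EuclideanSpace ℝ (Fin 2) :=
    fun n => if h : (n : ℕ) < M then p ⟨n, h⟩ else p ⟨0, hM⟩ with hp'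
  set R' : Fin N → Set (EuclideanSpace ℝ (Fin 2)) :=
    fun n => if h : (n : ℕ) < M then R ⟨n, h⟩ else ∅ with hR'
  set T : Fin N → Fin M :=
    fun n => if h : (n : ℕ) < M then ⟨n, h⟩ else ⟨0, hM⟩ with hT
  -- partition property
  have hpart' : IsPartitionOn Ω R' := by
    refine ⟨?_, ?_, ?_⟩
    · intro n
      by_cases h : (n : ℕ) < M
      · simpa [hR', h] using hpart.1 ⟨n, h⟩
      · simp [hR', h]
    · intro i j hij
      unfold Function.onFun
      by_cases hi : (i : ℕ) < M
      · by_cases hj : (j : ℕ) < M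
        · have : (⟨(i : ℕ), hi⟩ : Fin M) ≠ ⟨(j : ℕ), hj⟩ := by
            intro h
            rw [Fin.mk.injEq] at h
            exact hij (Fin.ext h)
          simpa [hR', hi, hj] using hpart.2.1 this
        · simp [hR', hj]
      · simp [hR', hi]
    · have : (⋃ n, R' n) = ⋃ i, R i := by
        apply Set.Subset.antisymm
        · refine Set.iUnion_subset fun n => ?_
          by_cases h : (n : ℕ) < M
          · simpa [hR', h] using Set.subset_iUnion R ⟨(n : ℕ), h⟩
          · simp [hR', h]
        · refine Set.iUnion_subset fun i => ?_
          have h : ((Fin.castLE hMN.le i : Fin N) : ℕ) < M := i.isLt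
          calc R i = R' (Fin.castLE hMN.le i) := by simp [hR', h]
            _ ⊆ ⋃ n, R' n := Set.subset_iUnion R' _
      rw [this, hpart.2.2]
  -- AP power is zero
  have hap : apPower b f p' p R' T = 0 := by
    refine Finset.sum_eq_zero fun n _ => ?_
    have hzero : p' n - p (T n) = 0 := by
      by_cases h : (n : ℕ) < M <;> simp [hp', hT, h]
    rw [hzero]
    simp
  -- sensor power equals attained distortion
  have hsp : sensorPower a f p' R' =
      sensorPower (fun i => a (Fin.castLE hMN.le i)) f p R := by
    set g : ℕ → ℝ := fun k =>
      if h : k < M then ∫ w in R ⟨k, h⟩, a (Fin.castLE hMN.le ⟨k, h⟩) * ‖p ⟨k, h⟩ - w‖ ^ 2 * f w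
      else 0 with hg
    have hL : ∀ n : Fin N,
        (∫ w in R' n, a n * ‖p' n - w‖ ^ 2 * f w) = g (n : ℕ) := by
      intro n
      by_cases h : (n : ℕ) < M
      · have han : a (Fin.castLE hMN.le ⟨(n : ℕ), h⟩) = a n := rfl
        simp [hg, hR', hp', h, han]
      · simp [hg, hR', h]
    have hRr : ∀ i : Fin M,
        (∫ w in R i, a (Fin.castLE hMN.le i) * ‖p i - w‖ ^ 2 * f w) = g (i : ℕ) := by
      intro i
      simp only [hg]
      rw [dif_pos i.isLt]
    unfold sensorPower
    calc (∑ n : Fin N, ∫ w in R' n, a n * ‖p' n - w‖ ^ 2 * f w)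
        = ∑ n : Fin N, g (n : ℕ) := by
          exact Finset.sum_congr rfl fun n _ => hL n
      _ = ∑ k ∈ Finset.range N, g k := Fin.sum_univ_eq_sum_range g N
      _ = ∑ k ∈ Finset.range M, g k := by
          refine (Finset.sum_subset (Finset.range_subset_range.2 hMN.le) ?_).symm
          intro k _ hk
          simp only [Finset.mem_range] at hk
          simp [hg, hk]
      _ = ∑ i : Fin M, g (i : ℕ) := (Fin.sum_univ_eq_sum_range g M).symm
      _ = ∑ i : Fin M, ∫ w in R i,
            (fun i => a (Fin.castLE hMN.le i)) i * ‖p i - w‖ ^ 2 * f w := by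
          exact Finset.sum_congr rfl fun i _ => (hRr i).symm
  -- membership of 0 in the set
  have hmem : (0 : ℝ) ∈ {x | ∃ (p : Fin N → EuclideanSpace ℝ (Fin 2))
      (q : Fin M → EuclideanSpace ℝ (Fin 2))
      (R : Fin N → Set (EuclideanSpace ℝ (Fin 2))) (T : Fin N → Fin M),
    IsPartitionOn Ω R ∧ apPower b f p q R T = x ∧ sensorPower a f p R ≤ s} := by
    exact ⟨p', p, R', T, hpart', hap, by rw [hsp, hval]; exact hs⟩
  -- every element of the set is nonnegative
  have hlb : ∀ x ∈ {x | ∃ (p : Fin N → EuclideanSpace ℝ (Fin 2))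
      (q : Fin M → EuclideanSpace ℝ (Fin 2))
      (R : Fin N → Set (EuclideanSpace ℝ (Fin 2))) (T : Fin N → Fin M),
    IsPartitionOn Ω R ∧ apPower b f p q R T = x ∧ sensorPower a f p R ≤ s}, (0:ℝ) ≤ x := by
    rintro x ⟨P, Q, RR, TT, _, hx, _⟩
    rw [← hx]
    refine Finset.sum_nonneg fun n _ => ?_
    refine integral_nonneg fun w => ?_
    exact mul_nonneg (mul_nonneg (hb n (TT n)).le (by positivity)) (hf w)
  unfold APSensorFn
  exact le_antisymm (csInf_le ⟨0, hlb⟩ hmem) (le_csInf ⟨0, hmem⟩ hlb)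

end
end

section
/- Fix a partition R with H(R) < J(R) and suppose b_{i,1} = κ a_i for all i with κ > 0. Then for s with H(R) ≤ s ≤ J(R), the constrained AP power A(s,R) = inf{ ∑_n b_{n,1} v_n ‖p_n − q‖² : ∑_n a_n v_n ‖p_n − c_n‖² ≤ s − H(R) } equals κ·(√(J(R) − H(R)) − √(s − H(R)))², and A(s,R) = 0 for s ≥ J(R). -/
/-!
With weights `w n = a n * v n`, the constraint puts the configuration `p` within `√(s - H)` of
`c` in the weighted `L²` distance, and the AP power is `κ` times the squared weighted distance
from `p` to a constant configuration `q`. By the parallel axis theorem the constant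
configuration closest to `c` is the centroid `x*`, at distance `√(J - H)`; the triangle
inequality then bounds the AP power below by `κ (√(J - H) - √(s - H))²`, and moving every `p n`
from `c n` towards `x*` by the fraction `√(s - H) / √(J - H)` (all the way once `s ≥ J`)
attains the bound.
-/

open Finset Real

section WeightedConfigurations

variable {ι E : Type*} [Fintype ι] [NormedAddCommGroup E] [InnerProductSpace ℝ E]
  {w : ι → ℝ}

theorem sum_smul_sub_centerMass (hW : ∑ i, w i ≠ 0) (z : ι → E) :
    ∑ i, w i • (z i - univ.centerMass w z) = 0 := by
  simp only [Finset.centerMass, smul_sub, sum_sub_distrib, smul_smul, ← sum_smul, ← sum_mul,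
    mul_inv_cancel₀ hW, one_smul, sub_self]

theorem sum_mul_norm_sub_sq_eq_centerMass (hW : ∑ i, w i ≠ 0) (z : ι → E) (q : E) :
    ∑ i, w i * ‖z i - q‖ ^ 2 =
      ∑ i, w i * ‖z i - univ.centerMass w z‖ ^ 2 +
        (∑ i, w i) * ‖univ.centerMass w z - q‖ ^ 2 := by
  set m := univ.centerMass w z
  have hcross : ∑ i, w i * inner ℝ (z i - m) (m - q) = 0 := by
    simpa [sum_inner, real_inner_smul_left] using
      congrArg (inner ℝ · (m - q)) (sum_smul_sub_centerMass hW z)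
  have hsplit : ∀ i, ‖z i - q‖ ^ 2 =
      ‖z i - m‖ ^ 2 + 2 * inner ℝ (z i - m) (m - q) + ‖m - q‖ ^ 2 := by
    intro i
    rw [← norm_add_sq_real, sub_add_sub_cancel]
  simp only [hsplit, mul_add, sum_add_distrib, ← sum_mul, mul_left_comm _ (2 : ℝ), ← mul_sum,
    hcross, mul_zero, add_zero]

theorem sum_mul_norm_sub_centerMass_sq_le (hw : ∀ i, 0 ≤ w i) (z : ι → E) (q : E) :
    ∑ i, w i * ‖z i - univ.centerMass w z‖ ^ 2 ≤ ∑ i, w i * ‖z i - q‖ ^ 2 := by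
  by_cases hW : ∑ i, w i = 0
  · have hw0 : ∀ i, w i = 0 := fun i =>
      (sum_eq_zero_iff_of_nonneg fun i _ => hw i).1 hW i (mem_univ i)
    simp [hw0]
  · rw [sum_mul_norm_sub_sq_eq_centerMass hW z q, le_add_iff_nonneg_right]
    exact mul_nonneg (sum_nonneg fun i _ => hw i) (sq_nonneg _)

theorem sqrt_sum_mul_norm_sq_eq_norm (hw : ∀ i, 0 ≤ w i) (x : ι → E) :
    √(∑ i, w i * ‖x i‖ ^ 2) = ‖WithLp.toLp 2 (fun i => √(w i) • x i)‖ := by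
  simp [PiLp.norm_eq_of_L2, norm_smul, mul_pow, sq_sqrt (hw _)]

theorem sqrt_sum_mul_norm_sub_sq_le (hw : ∀ i, 0 ≤ w i) (x y z : ι → E) :
    √(∑ i, w i * ‖x i - z i‖ ^ 2) ≤
      √(∑ i, w i * ‖x i - y i‖ ^ 2) + √(∑ i, w i * ‖y i - z i‖ ^ 2) := by
  simp_rw [sqrt_sum_mul_norm_sq_eq_norm hw]
  refine le_of_eq_of_le ?_ (norm_add_le _ _)
  rw [← WithLp.toLp_add]
  congr 2 with i
  simp [smul_sub]

theorem sqrt_sum_mul_norm_sub_centerMass_sq_sub_le (hw : ∀ i, 0 ≤ w i) {r : ℝ} {p c : ι → E}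
    (hp : ∑ i, w i * ‖p i - c i‖ ^ 2 ≤ r) (q : E) :
    √(∑ i, w i * ‖c i - univ.centerMass w c‖ ^ 2) - √r ≤ √(∑ i, w i * ‖p i - q‖ ^ 2) := by
  have hcentroid := sqrt_le_sqrt (sum_mul_norm_sub_centerMass_sq_le hw c q)
  have htriangle := sqrt_sum_mul_norm_sub_sq_le hw c p (fun _ => q)
  have hconstraint : √(∑ i, w i * ‖c i - p i‖ ^ 2) ≤ √r := by
    simp_rw [norm_sub_rev (c _)]
    exact sqrt_le_sqrt hp
  linarith

theorem sum_mul_norm_lineMap_sub_left_sq (c : ι → E) (m : E) (t : ℝ) :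
    ∑ i, w i * ‖AffineMap.lineMap (c i) m t - c i‖ ^ 2 = t ^ 2 * ∑ i, w i * ‖c i - m‖ ^ 2 := by
  simp_rw [← dist_eq_norm, dist_lineMap_left, mul_sum, Real.norm_eq_abs, mul_pow, sq_abs]
  exact sum_congr rfl fun i _ => by ring

theorem sum_mul_norm_lineMap_sub_right_sq (c : ι → E) (m : E) (t : ℝ) :
    ∑ i, w i * ‖AffineMap.lineMap (c i) m t - m‖ ^ 2 =
      (1 - t) ^ 2 * ∑ i, w i * ‖c i - m‖ ^ 2 := by
  simp_rw [← dist_eq_norm, dist_lineMap_right, mul_sum, Real.norm_eq_abs, mul_pow, sq_abs]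
  exact sum_congr rfl fun i _ => by ring

/-- `A(s, R)` is the infimum of `apPowerValues (b * v) (a * v) c (s - H)`. -/
def apPowerValues (u w : ι → ℝ) (c : ι → E) (r : ℝ) : Set ℝ :=
  {x | ∃ (p : ι → E) (q : E), ∑ i, u i * ‖p i - q‖ ^ 2 = x ∧ ∑ i, w i * ‖p i - c i‖ ^ 2 ≤ r}

variable {u : ι → ℝ} {κ : ℝ}

theorem mul_one_sub_sq_mul_mem_apPowerValues (hu : ∀ i, u i = κ * w i) (c : ι → E) (m : E) {t r : ℝ}
    (ht : t ^ 2 * ∑ i, w i * ‖c i - m‖ ^ 2 ≤ r) :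
    κ * ((1 - t) ^ 2 * ∑ i, w i * ‖c i - m‖ ^ 2) ∈ apPowerValues u w c r := by
  refine ⟨fun i => AffineMap.lineMap (c i) m t, m, ?_, ?_⟩
  · simp_rw [hu, mul_assoc, ← mul_sum, sum_mul_norm_lineMap_sub_right_sq]
  · rwa [sum_mul_norm_lineMap_sub_left_sq]

theorem isLeast_apPowerValues_of_le (hw : ∀ i, 0 ≤ w i) (hκ : 0 ≤ κ) (hu : ∀ i, u i = κ * w i)
    {c : ι → E} {V r : ℝ} (hV : ∑ i, w i * ‖c i - univ.centerMass w c‖ ^ 2 = V)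
    (hr : 0 ≤ r) (hrV : r ≤ V) :
    IsLeast (apPowerValues u w c r) (κ * (√V - √r) ^ 2) := by
  constructor
  · set t := √r / √V
    have hscale : t * √V = √r := div_mul_cancel_of_imp fun h => by
      rw [sqrt_eq_zero'] at h ⊢
      linarith
    have hV2 : √V ^ 2 = V := sq_sqrt (hr.trans hrV)
    have hr2 : √r ^ 2 = r := sq_sqrt hr
    convert mul_one_sub_sq_mul_mem_apPowerValues hu c (univ.centerMass w c) (t := t) ?_ using 2
    · rw [hV]
      linear_combination (2 * √V - √r - t * √V) * hscale + (1 - t) ^ 2 * hV2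
    · rw [hV]
      linear_combination (t * √V + √r) * hscale - t ^ 2 * hV2 + hr2
  · rintro x ⟨p, q, rfl, hp⟩
    simp_rw [hu, mul_assoc, ← mul_sum]
    gcongr
    calc (√V - √r) ^ 2 ≤ √(∑ i, w i * ‖p i - q‖ ^ 2) ^ 2 := by
          gcongr
          · exact sub_nonneg.2 (sqrt_le_sqrt hrV)
          · exact hV ▸ sqrt_sum_mul_norm_sub_centerMass_sq_sub_le hw hp q
      _ = ∑ i, w i * ‖p i - q‖ ^ 2 :=
          sq_sqrt (sum_nonneg fun i _ => mul_nonneg (hw i) (sq_nonneg _))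

theorem isLeast_apPowerValues_zero_of_ge (hw : ∀ i, 0 ≤ w i) (hκ : 0 ≤ κ)
    (hu : ∀ i, u i = κ * w i) {c : ι → E} {r : ℝ}
    (hr : ∑ i, w i * ‖c i - univ.centerMass w c‖ ^ 2 ≤ r) :
    IsLeast (apPowerValues u w c r) 0 := by
  constructor
  · simpa using mul_one_sub_sq_mul_mem_apPowerValues hu c _ (t := 1) (by simpa using hr)
  · rintro x ⟨p, q, rfl, -⟩
    exact sum_nonneg fun i _ => mul_nonneg (hu i ▸ mul_nonneg hκ (hw i)) (sq_nonneg _)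

end WeightedConfigurations

theorem constrained_ap_power_closed_form_general
    (N : ℕ)
    (a v : Fin N → ℝ) (ha : ∀ n, 0 < a n) (hv : ∀ n, 0 < v n)
    (κ : ℝ) (hκ : 0 < κ)
    (b : Fin N → ℝ) (hb : ∀ n, b n = κ * a n)
    (c : Fin N → EuclideanSpace ℝ (Fin 2))
    (xstar : EuclideanSpace ℝ (Fin 2))
    (hx : xstar = (∑ n, a n * v n)⁻¹ • ∑ n, (a n * v n) • c n)
    (H J : ℝ)
    (hJ : J - H = ∑ n, a n * v n * ‖xstar - c n‖ ^ 2)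
    (A : ℝ → ℝ)
    (hA : ∀ s, A s = sInf {x | ∃ (p : Fin N → EuclideanSpace ℝ (Fin 2))
        (q : EuclideanSpace ℝ (Fin 2)),
      (∑ n, b n * v n * ‖p n - q‖ ^ 2) = x ∧
        (∑ n, a n * v n * ‖p n - c n‖ ^ 2) ≤ s - H}) :
    (∀ s, H ≤ s → s ≤ J →
      A s = κ * (Real.sqrt (J - H) - Real.sqrt (s - H)) ^ 2)
    ∧ (∀ s, J ≤ s → A s = 0) := by
  set w : Fin N → ℝ := fun n => a n * v n
  have hw : ∀ n, 0 ≤ w n := fun n => (mul_pos (ha n) (hv n)).le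
  have hbw : ∀ n, b n * v n = κ * w n := fun n => by rw [hb, mul_assoc]
  have hcentroid : univ.centerMass w c = xstar := hx.symm
  have hV : ∑ n, w n * ‖c n - univ.centerMass w c‖ ^ 2 = J - H := by
    rw [hcentroid, hJ]
    exact sum_congr rfl fun n _ => by rw [norm_sub_rev]
  refine ⟨fun s hHs hsJ => ?_, fun s hJs => ?_⟩
  · rw [hA]
    exact (isLeast_apPowerValues_of_le hw hκ.le hbw hV (sub_nonneg.2 hHs) (by linarith)).csInf_eq
  · rw [hA]
    exact (isLeast_apPowerValues_zero_of_ge hw hκ.le hbw (by linarith)).csInf_eq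

/-- Closed form of the constrained AP power A(s,R) for a fixed
partition with b_{i,1} = κ·a_i. -/
theorem constrained_ap_power_closed_form
    (N : ℕ) (hN : 0 < N)
    (a v : Fin N → ℝ) (ha : ∀ n, 0 < a n) (hv : ∀ n, 0 < v n)
    (κ : ℝ) (hκ : 0 < κ)
    (b : Fin N → ℝ) (hb : ∀ n, b n = κ * a n)
    (c : Fin N → EuclideanSpace ℝ (Fin 2))
    (xstar : EuclideanSpace ℝ (Fin 2))
    (hx : xstar = (∑ n, a n * v n)⁻¹ • ∑ n, (a n * v n) • c n)
    (H J : ℝ) (hHJ : H < J)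
    (hJ : J - H = ∑ n, a n * v n * ‖xstar - c n‖ ^ 2)
    (A : ℝ → ℝ)
    (hA : ∀ s, A s = sInf {x | ∃ (p : Fin N → EuclideanSpace ℝ (Fin 2))
        (q : EuclideanSpace ℝ (Fin 2)),
      (∑ n, b n * v n * ‖p n - q‖ ^ 2) = x ∧
        (∑ n, a n * v n * ‖p n - c n‖ ^ 2) ≤ s - H}) :
    (∀ s, H ≤ s → s ≤ J →
      A s = κ * (Real.sqrt (J - H) - Real.sqrt (s - H)) ^ 2)
    ∧ (∀ s, J ≤ s → A s = 0) :=
  constrained_ap_power_closed_form_general N a v ha hv κ hκ b hb c xstar hx H J hJ A hA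
end
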